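/- Let t ≥ 1 and (a_1,b_1),...,(a_t,b_t) be t pairs of positive integers. Then there exists a set A ⊆ ℕ with asymptotic density d(A) = ∏_{i=1}^t 1/(a_i + b_i) such that the t+1 sets A, Γ_{a_1,b_1}(A), Γ_{a_1,b_1}∘Γ_{a_2,b_2}(A), ..., ◯_{j=1}^t Γ_{a_j,b_j}(A) are pairwise distinct. -/

import Mathlib

open scoped Classical

/-- The linear operation `Γ_{a,b}(X) = aX + bX = {a x + b x' : x, x' ∈ X}`. -/
def Gamma (a b : ℤ) (X : Set ℤ) : Set ℤ :=
  {z | ∃ x ∈ X, ∃ y ∈ X, z = a * x + b * y}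

/-- The `s`-fold composition `◯_{j=1}^s Γ_{a_j,b_j}(X)` (0-indexed). -/
def iterComp (a b : ℕ → ℤ) : ℕ → Set ℤ → Set ℤ
  | 0, X => X
  | s + 1, X => Gamma (a s) (b s) (iterComp a b s X)

/-!
Take for `A` the positive multiples of `q = ∏ (aᵢ + bᵢ)`, an arithmetic progression of density
`1 / q`. If `m` is the least element of `X` and `a, b ≥ 0`, then `(a + b) m` is the least element of
`Γ_{a,b}(X)`, so the least element of the `s`-fold composition is `q ∏_{j<s} (aⱼ + bⱼ)`. These
minima strictly increase with `s` because every `aⱼ + bⱼ ≥ 2`, so the sets are pairwise distinct.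
-/

open Finset Filter Topology

theorem tendsto_card_filter_dvd_div (q : ℕ) :
    Tendsto (fun n : ℕ => (#((Icc 1 n).filter (q ∣ ·)) : ℝ) / n) atTop (𝓝 (1 / (q : ℝ))) := by
  refine ((tendsto_nat_floor_mul_div_atTop (a := 1 / (q : ℝ)) (by positivity)).comp
    tendsto_natCast_atTop_atTop).congr fun n => ?_
  rw [Function.comp_apply, one_div_mul_eq_div, Nat.floor_div_eq_div, ← zero_add 1,
    Icc_add_one_left_eq_Ioc, Nat.Ioc_filter_dvd_card_eq_div]

theorem tendsto_card_filter_intCast_dvd_div {d : ℤ} (hd : 0 ≤ d) :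
    Tendsto (fun n : ℕ => (#(((Icc 1 n).image ((↑) : ℕ → ℤ)).filter (d ∣ ·)) : ℝ) / n) atTop
      (𝓝 (1 / (d : ℝ))) := by
  lift d to ℕ using hd
  simpa only [filter_image, card_image_of_injective _ Nat.cast_injective, Function.comp_def,
    Int.natCast_dvd_natCast, Int.cast_natCast] using tendsto_card_filter_dvd_div d

theorem isLeast_gamma {a b m : ℤ} {X : Set ℤ} (ha : 0 ≤ a) (hb : 0 ≤ b) (hX : IsLeast X m) :
    IsLeast (Gamma a b X) ((a + b) * m) := by
  refine ⟨⟨m, hX.1, m, hX.1, add_mul a b m⟩, ?_⟩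
  rintro _ ⟨x, hx, y, hy, rfl⟩
  rw [add_mul]
  exact add_le_add (mul_le_mul_of_nonneg_left (hX.2 hx) ha)
    (mul_le_mul_of_nonneg_left (hX.2 hy) hb)

theorem isLeast_iterComp {a b : ℕ → ℤ} {s : ℕ} (hab : ∀ i < s, 0 ≤ a i ∧ 0 ≤ b i)
    {X : Set ℤ} {m : ℤ} (hX : IsLeast X m) :
    IsLeast (iterComp a b s X) ((∏ i ∈ range s, (a i + b i)) * m) := by
  induction s with
  | zero => simpa [iterComp] using hX
  | succ s ih =>
    obtain ⟨ha, hb⟩ := hab s s.lt_succ_self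
    rw [prod_range_succ, mul_comm _ (a s + b s), mul_assoc]
    exact isLeast_gamma ha hb (ih fun i hi => hab i (hi.trans s.lt_succ_self))

theorem strictMonoOn_prod_range {R : Type*} [CommSemiring R] [PartialOrder R]
    [IsStrictOrderedRing R] {c : ℕ → R} {t : ℕ} (hc : ∀ i < t, 1 < c i) :
    StrictMonoOn (fun s => ∏ i ∈ range s, c i) (Set.Iic t) := by
  refine strictMonoOn_Iic_of_lt_succ fun s hs => ?_
  have hpos : 0 < ∏ i ∈ range s, c i :=
    prod_pos fun i hi => zero_lt_one.trans (hc i ((mem_range.1 hi).trans hs))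
  simpa only [Order.succ_eq_add_one, prod_range_succ] using lt_mul_of_one_lt_right hpos (hc s hs)

theorem injOn_iterComp {a b : ℕ → ℤ} {t : ℕ} (hab : ∀ i < t, 0 < a i ∧ 0 < b i)
    {X : Set ℤ} {m : ℤ} (hX : IsLeast X m) (hm : 0 < m) :
    Set.InjOn (fun s => iterComp a b s X) (Set.Iic t) := by
  intro s₁ h₁ s₂ h₂ heq
  have hab' (s) (hs : s ≤ t) : ∀ i < s, 0 ≤ a i ∧ 0 ≤ b i := fun i hi =>
    (hab i (hi.trans_le hs)).imp le_of_lt le_of_lt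
  have hleast₂ := isLeast_iterComp (hab' s₂ h₂) hX
  rw [← show iterComp a b s₁ X = iterComp a b s₂ X from heq] at hleast₂
  refine (strictMonoOn_prod_range fun i hi => ?_).injOn h₁ h₂
    (mul_right_cancel₀ hm.ne' ((isLeast_iterComp (hab' s₁ h₁) hX).unique hleast₂))
  linarith [hab i hi]

theorem exists_unstable_set_general (t : ℕ) (a b : ℕ → ℤ)
    (hab : ∀ i < t, 0 < a i ∧ 0 < b i) :
    ∃ A : Set ℤ, (∀ x ∈ A, 0 ≤ x) ∧
      Filter.Tendsto
        (fun n : ℕ => (((Finset.Icc 1 n).filter fun m => (m : ℤ) ∈ A).card : ℝ) / n)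
        Filter.atTop
        (nhds (∏ i ∈ Finset.range t, (1 / ((a i + b i : ℤ) : ℝ)))) ∧
      ∀ s₁ ≤ t, ∀ s₂ ≤ t, s₁ ≠ s₂ → iterComp a b s₁ A ≠ iterComp a b s₂ A := by
  set q := ∏ i ∈ range t, (a i + b i)
  have hq : 0 < q := prod_pos fun i hi => by linarith [hab i (mem_range.1 hi)]
  have hleast : IsLeast {z | 0 < z ∧ q ∣ z} q :=
    ⟨⟨hq, dvd_rfl⟩, fun z hz => Int.le_of_dvd hz.1 hz.2⟩
  refine ⟨{z | 0 < z ∧ q ∣ z}, fun z hz => hz.1.le, ?_,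
    fun s₁ h₁ s₂ h₂ hne heq => hne (injOn_iterComp hab hleast hq h₁ h₂ heq)⟩
  have hdensity : ∏ i ∈ range t, (1 / ((a i + b i : ℤ) : ℝ)) = 1 / (q : ℝ) := by
    simp only [q, one_div, prod_inv_distrib, Int.cast_prod]
  rw [hdensity]
  refine (tendsto_card_filter_intCast_dvd_div hq.le).congr fun n => ?_
  have hA : ∀ m ∈ (Icc 1 n).image ((↑) : ℕ → ℤ), m ∈ {z | 0 < z ∧ q ∣ z} ↔ q ∣ m := by
    simp only [mem_image, mem_Icc]
    rintro _ ⟨k, ⟨hk, -⟩, rfl⟩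
    exact and_iff_right (by omega)
  -- In the statement, `fun m => (m : ℤ) ∈ A` makes `Finset.Icc 1 n` a `Finset ℤ`, coerced
  -- through the monad structure of `Finset`; this turns it into an `image`.
  simp only [pure_def, Finset.bind_def, sup_singleton_apply]
  congr 2
  convert congrArg card (filter_congr hA).symm

theorem exists_unstable_set (t : ℕ) (ht : 1 ≤ t) (a b : ℕ → ℤ)
    (hab : ∀ i < t, 0 < a i ∧ 0 < b i) :
    ∃ A : Set ℤ, (∀ x ∈ A, 0 ≤ x) ∧
      Filter.Tendsto
        (fun n : ℕ => (((Finset.Icc 1 n).filter fun m => (m : ℤ) ∈ A).card : ℝ) / n)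
        Filter.atTop
        (nhds (∏ i ∈ Finset.range t, (1 / ((a i + b i : ℤ) : ℝ)))) ∧
      ∀ s₁ ≤ t, ∀ s₂ ≤ t, s₁ ≠ s₂ → iterComp a b s₁ A ≠ iterComp a b s₂ A :=
  exists_unstable_set_general t a b hab
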